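/- arXiv:2112.03646 — 3 statements merged into one kernel-verified Lean document; each statement's English description precedes it below -/
import Mathlib

section
/- Let R be a commutative ring, F a formal group law over R with formal inverse ι, and G ∈ R[[T]] the unique power series with X + ι(X) = G(X·ι(X)). Then the R[[U]]-algebra homomorphism R[[U]][T]/(T² − G(U)·T + U) → R[[X]] determined by sending U to X·ι(X) and T to X is well defined (since X² − G(X·ι(X))·X + X·ι(X) = 0) and is an isomorphism of R-algebras. In particular R[[X]] is a finite module over the image of R[[U]] under the substitution U ↦ X·ι(X). -/
/-!
Since `F(X, Y) = X + Y + (terms of degree ≥ 2)`, the formal inverse is `ι = -X + …`, so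
`u = X·ι(X) = X²·w` with `w` a unit. Division with remainder by `u` writes every `h` as
`h₀ + h₁X + u·q`; iterating, the remainders assemble into `a, b ∈ R⟦U⟧` with
`h = a(u) + b(u)·X`, and comparing lowest-order terms shows `a, b` are unique. Thus `1, X` is a
basis of `R⟦X⟧` over the image of `R⟦U⟧`, and the map out of `R⟦U⟧[T]/(T² − G(U)T + U)`, whose
source is spanned by `1, T`, sends this spanning pair onto that basis.
-/

noncomputable section

/-- The weight (total degree) of a multi-exponent. -/
def wt {τ : Type*} (d : τ →₀ ℕ) : ℕ := d.sum fun _ e => e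

/-- Substitution of a family of multivariate power series (each having zero constant
coefficient) into a multivariate power series in finitely many variables.  The coefficient
of the result in multidegree `d` is computed from a sufficiently large truncation of `f`;
this agrees with the usual substitution whenever every `a i` has zero constant coefficient. -/
def msubst {R : Type*} [CommRing R] {k : ℕ} {τ : Type*}
    (a : Fin k → MvPowerSeries τ R) (f : MvPowerSeries (Fin k) R) : MvPowerSeries τ R :=
  fun d => MvPowerSeries.coeff d
    (MvPolynomial.eval₂ (MvPowerSeries.C (σ := τ) (R := R)) a
      (MvPowerSeries.trunc R (Finsupp.equivFunOnFinite.symm fun _ => wt d + 1) f))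

/-- Substitution of a multivariate power series with zero constant coefficient into a
one-variable power series. -/
def psubst {R : Type*} [CommRing R] {τ : Type*}
    (a : MvPowerSeries τ R) (f : PowerSeries R) : MvPowerSeries τ R :=
  fun d => MvPowerSeries.coeff d
    (Polynomial.eval₂ (MvPowerSeries.C (σ := τ) (R := R)) a (PowerSeries.trunc (wt d + 1) f))

/-- A (one-dimensional, commutative) formal group law over `R`:
`F(X,0) = X`, `F(0,Y) = Y`, `F(X,Y) = F(Y,X)` and `F(F(X,Y),Z) = F(X,F(Y,Z))`. -/
structure IsFGL {R : Type*} [CommRing R] (F : MvPowerSeries (Fin 2) R) : Prop where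
  zero_right : msubst ![MvPowerSeries.X 0, 0] F = (MvPowerSeries.X 0 : MvPowerSeries (Fin 2) R)
  zero_left : msubst ![0, MvPowerSeries.X 1] F = (MvPowerSeries.X 1 : MvPowerSeries (Fin 2) R)
  comm : msubst ![MvPowerSeries.X 1, MvPowerSeries.X 0] F = F
  assoc : msubst ![msubst ![(MvPowerSeries.X 0 : MvPowerSeries (Fin 3) R), MvPowerSeries.X 1] F,
        MvPowerSeries.X 2] F
      = msubst ![(MvPowerSeries.X 0 : MvPowerSeries (Fin 3) R),
        msubst ![MvPowerSeries.X 1, MvPowerSeries.X 2] F] F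

/-- `ι` is the formal inverse of the formal group law `F`: it is composable and
`F(X, ι(X)) = 0` in `R[[X]]`. -/
def IsFormalInverse {R : Type*} [CommRing R] (F : MvPowerSeries (Fin 2) R)
    (ι : PowerSeries R) : Prop :=
  PowerSeries.constantCoeff ι = 0 ∧
    msubst ![(PowerSeries.X : PowerSeries R), ι] F = 0

end


open Finsupp in
theorem MvPowerSeries.coeff_prod_pow_eq_zero_of_degree_lt {R : Type*} [CommRing R]
    {ι τ : Type*} {a : ι → MvPowerSeries τ R} (ha : ∀ i, constantCoeff (a i) = 0)
    {n : ι →₀ ℕ} {e : τ →₀ ℕ} (h : e.degree < n.degree) :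
    coeff e (n.prod fun i k => a i ^ k) = 0 := by
  refine coeff_of_lt_order (lt_of_lt_of_le (Nat.cast_lt.mpr h) (.trans ?_ (le_order_prod _ _)))
  rw [degree_apply, Nat.cast_sum]
  exact Finset.sum_le_sum fun i _ => le_order_pow_of_constantCoeff_eq_zero _ (ha i)

open Finsupp in
theorem MvPolynomial.coeff_single_one_eval₂ {R : Type*} [CommRing R] {ι τ : Type*} [Fintype ι]
    {a : ι → MvPowerSeries τ R} (ha : ∀ i, MvPowerSeries.constantCoeff (a i) = 0)
    (P : MvPolynomial ι R) (j : τ) :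
    MvPowerSeries.coeff (single j 1) (P.eval₂ MvPowerSeries.C a) =
      ∑ i, P.coeff (single i 1) * MvPowerSeries.coeff (single j 1) (a i) := by
  classical
  induction P using MvPolynomial.induction_on' with
  | add P Q hP hQ =>
    simp only [eval₂_add, map_add, hP, hQ, coeff_add, add_mul, Finset.sum_add_distrib]
  | monomial n c =>
    simp only [eval₂_monomial, MvPowerSeries.coeff_C_mul, coeff_monomial]
    by_cases hn : ∃ i, n = single i 1
    · obtain ⟨i, rfl⟩ := hn
      simp [single_left_inj one_ne_zero]
    · simp only [not_exists.mp hn, if_false, zero_mul, Finset.sum_const_zero]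
      rcases Nat.lt_or_ge 1 n.degree with h | h
      · rw [MvPowerSeries.coeff_prod_pow_eq_zero_of_degree_lt ha (by simpa using h), mul_zero]
      · have hn0 : n = 0 := by
          rw [← degree_eq_zero_iff]
          have : n.degree ≠ 1 := fun h1 => hn ((sum_eq_one_iff n).mp h1)
          omega
        simp [hn0, MvPowerSeries.coeff_one]

theorem coeff_single_one_msubst {R : Type*} [CommRing R] {k : ℕ} {τ : Type*}
    {a : Fin k → MvPowerSeries τ R} (ha : ∀ i, MvPowerSeries.constantCoeff (a i) = 0)
    (F : MvPowerSeries (Fin k) R) (j : τ) :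
    MvPowerSeries.coeff (Finsupp.single j 1) (msubst a F) =
      ∑ i, MvPowerSeries.coeff (Finsupp.single i 1) F *
        MvPowerSeries.coeff (Finsupp.single j 1) (a i) := by
  rw [MvPowerSeries.coeff_apply, msubst, MvPolynomial.coeff_single_one_eval₂ ha]
  refine Finset.sum_congr rfl fun i _ => ?_
  have hwt : wt (Finsupp.single j 1) = 1 := Finsupp.sum_single_index rfl
  rw [MvPowerSeries.coeff_trunc, hwt, if_pos]
  refine Finsupp.lt_def.mpr ⟨fun l => ?_, i, by simp⟩
  simp only [Finsupp.single_apply, Finsupp.equivFunOnFinite_symm_apply_apply]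
  split <;> omega

theorem IsFGL.coeff_single_one {R : Type*} [CommRing R] {F : MvPowerSeries (Fin 2) R}
    (hF : IsFGL F) (i : Fin 2) : MvPowerSeries.coeff (Finsupp.single i 1) F = 1 := by
  fin_cases i
  · have h := congrArg (MvPowerSeries.coeff (Finsupp.single 0 1)) hF.zero_right
    rw [coeff_single_one_msubst (by simp [Fin.forall_fin_two])] at h
    simpa [MvPowerSeries.coeff_X] using h
  · have h := congrArg (MvPowerSeries.coeff (Finsupp.single 1 1)) hF.zero_left
    rw [coeff_single_one_msubst (by simp [Fin.forall_fin_two])] at h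
    simpa [MvPowerSeries.coeff_X] using h

theorem IsFormalInverse.coeff_one {R : Type*} [CommRing R] {F : MvPowerSeries (Fin 2) R}
    {ι : PowerSeries R} (hF : IsFGL F) (hι : IsFormalInverse F ι) :
    PowerSeries.coeff 1 ι = -1 := by
  have h := congrArg (MvPowerSeries.coeff (Finsupp.single () 1)) hι.2
  rw [coeff_single_one_msubst
    (Fin.forall_fin_two.mpr ⟨PowerSeries.constantCoeff_X, hι.1⟩)] at h
  have h' : 1 + PowerSeries.coeff 1 ι = 0 := by simpa [hF.coeff_single_one] using h
  linear_combination h'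

theorem psubst_eq_subst {R : Type*} [CommRing R] {τ : Type*} {a : MvPowerSeries τ R}
    (ha : MvPowerSeries.constantCoeff a = 0) (f : PowerSeries R) :
    psubst a f = f.subst a := by
  ext d
  have hwt : wt d = d.degree := rfl
  rw [PowerSeries.coeff_subst (PowerSeries.HasSubst.of_constantCoeff_zero ha),
    MvPowerSeries.coeff_apply, psubst, Polynomial.eval₂_eq_sum_range' _
      (PowerSeries.natDegree_trunc_lt f _), map_sum,
    finsum_eq_sum_of_support_subset (s := Finset.range (wt d + 1))]
  · refine Finset.sum_congr rfl fun k hk => ?_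
    rw [MvPowerSeries.coeff_C_mul, PowerSeries.coeff_trunc, if_pos (Finset.mem_range.mp hk),
      smul_eq_mul]
  · intro k hk
    rw [Function.mem_support] at hk
    rw [Finset.coe_range, Set.mem_Iio]
    by_contra hkd
    refine hk ?_
    rw [MvPowerSeries.coeff_of_lt_order, smul_zero]
    exact (Nat.cast_lt.mpr (by omega)).trans_le
      (MvPowerSeries.le_order_pow_of_constantCoeff_eq_zero k ha)

namespace PowerSeries

variable {R : Type*} [CommRing R]

theorem eq_C_add_C_mul_X_add_X_sq_mul (h : R⟦X⟧) :
    h = C (coeff 0 h) + C (coeff 1 h) * X + X ^ 2 * mk fun n => coeff (n + 2) h := by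
  ext (_ | _ | n) <;> simp [coeff_X_pow_mul', coeff_C]

theorem eq_zero_of_C_add_C_mul_X_add_X_sq_mul_eq_zero {r s : R} {q : R⟦X⟧}
    (h : C r + C s * X + X ^ 2 * q = 0) : r = 0 ∧ s = 0 ∧ q = 0 := by
  have h0 : r = 0 := by simpa [coeff_X_pow_mul', coeff_C] using congrArg (coeff 0) h
  have h1 : s = 0 := by simpa [coeff_X_pow_mul', coeff_C] using congrArg (coeff 1) h
  refine ⟨h0, h1, ?_⟩
  rw [h0, h1] at h
  exact X_pow_mul_cancel (k := 2) (by simpa using h)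

theorem eq_zero_of_forall_X_pow_dvd {f : R⟦X⟧} (h : ∀ n, X ^ n ∣ f) : f = 0 := by
  ext n
  exact X_pow_dvd_iff.mp (h (n + 1)) n (Nat.lt_succ_self n)

theorem algHom_eq_map_X_mul_map_shift_add_C (σ : R⟦X⟧ →ₐ[R] R⟦X⟧) (a : R⟦X⟧) :
    σ a = σ X * σ (mk fun n => coeff (n + 1) a) + C (constantCoeff a) := by
  conv_lhs => rw [eq_X_mul_shift_add_const a, map_add, map_mul]
  exact congrArg _ (σ.commutes _)

section OrderTwo

variable {σ : R⟦X⟧ →ₐ[R] R⟦X⟧} {w : R⟦X⟧ˣ}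

theorem shift_of_map_add_map_mul_X_eq_zero (hσ : σ X = X ^ 2 * (w : R⟦X⟧))
    {a b : R⟦X⟧} (h : σ a + σ b * X = 0) :
    constantCoeff a = 0 ∧ constantCoeff b = 0 ∧
      σ (mk fun n => coeff (n + 1) a) + σ (mk fun n => coeff (n + 1) b) * X = 0 := by
  rw [algHom_eq_map_X_mul_map_shift_add_C σ a, algHom_eq_map_X_mul_map_shift_add_C σ b, hσ] at h
  obtain ⟨ha, hb, hq⟩ := eq_zero_of_C_add_C_mul_X_add_X_sq_mul_eq_zero
    (r := constantCoeff a) (s := constantCoeff b)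
    (q := (w : R⟦X⟧) *
      (σ (mk fun n => coeff (n + 1) a) + σ (mk fun n => coeff (n + 1) b) * X))
    (by linear_combination h)
  exact ⟨ha, hb, (Units.mul_right_eq_zero w).mp hq⟩

theorem eq_zero_of_map_add_map_mul_X_eq_zero (hσ : σ X = X ^ 2 * (w : R⟦X⟧))
    {a b : R⟦X⟧} (h : σ a + σ b * X = 0) : a = 0 ∧ b = 0 := by
  suffices ∀ n (a b : R⟦X⟧), σ a + σ b * X = 0 → coeff n a = 0 ∧ coeff n b = 0 from
    ⟨ext fun n => (this n a b h).1, ext fun n => (this n a b h).2⟩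
  intro n
  induction n with
  | zero =>
    intro a b h
    obtain ⟨ha, hb, -⟩ := shift_of_map_add_map_mul_X_eq_zero hσ h
    simpa using And.intro ha hb
  | succ n ih =>
    intro a b h
    simpa using ih _ _ (shift_of_map_add_map_mul_X_eq_zero hσ h).2.2

theorem exists_map_add_map_mul_X_eq (hσ : σ X = X ^ 2 * (w : R⟦X⟧)) (h : R⟦X⟧) :
    ∃ a b, σ a + σ b * X = h := by
  let q : R⟦X⟧ → R⟦X⟧ := fun h => ↑w⁻¹ * mk fun n => coeff (n + 2) h
  have hq : ∀ h, h = C (coeff 0 h) + C (coeff 1 h) * X + σ X * q h := fun h => by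
    rw [hσ, mul_assoc, Units.mul_inv_cancel_left, ← eq_C_add_C_mul_X_add_X_sq_mul]
  -- `A h`, `B h` collect the remainders of the iterated division of `h` by `σ X`; the error
  -- `E h` is divisible by every power of `σ X`, which is why no continuity of `σ` is needed.
  let A : R⟦X⟧ → R⟦X⟧ := fun h => mk fun n => coeff 0 (q^[n] h)
  let B : R⟦X⟧ → R⟦X⟧ := fun h => mk fun n => coeff 1 (q^[n] h)
  let E : R⟦X⟧ → R⟦X⟧ := fun h => h - (σ (A h) + σ (B h) * X)
  have hE : ∀ h, E h = σ X * E (q h) := fun h => by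
    have hA := algHom_eq_map_X_mul_map_shift_add_C σ (A h)
    have hB := algHom_eq_map_X_mul_map_shift_add_C σ (B h)
    simp only [A, B, E, coeff_mk, constantCoeff_mk, Function.iterate_succ_apply,
      Function.iterate_zero_apply] at hA hB ⊢
    linear_combination hq h - hA - X * hB
  have hdvd : ∀ N h, X ^ N ∣ E h := by
    intro N
    induction N with
    | zero => simp
    | succ N ih =>
      intro h
      rw [hE, hσ, pow_succ', sq, mul_assoc, mul_assoc]
      exact mul_dvd_mul_left X (((ih (q h)).mul_left _).mul_left X)
  exact ⟨A h, B h, (sub_eq_zero.mp (eq_zero_of_forall_X_pow_dvd fun N => hdvd N h)).symm⟩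

theorem bijective_map_add_map_mul_X (hσ : σ X = X ^ 2 * (w : R⟦X⟧)) :
    Function.Bijective fun ab : R⟦X⟧ × R⟦X⟧ => σ ab.1 + σ ab.2 * X := by
  refine ⟨fun ab cd h => ?_, fun h => ?_⟩
  · obtain ⟨h1, h2⟩ := eq_zero_of_map_add_map_mul_X_eq_zero hσ (a := ab.1 - cd.1)
      (b := ab.2 - cd.2) (by simp only [map_sub]; linear_combination h)
    exact Prod.ext (sub_eq_zero.mp h1) (sub_eq_zero.mp h2)
  · obtain ⟨a, b, hab⟩ := exists_map_add_map_mul_X_eq hσ h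
    exact ⟨(a, b), hab⟩

end OrderTwo

end PowerSeries

namespace AdjoinRoot

open _root_.Polynomial

variable {A B : Type*} [CommRing A] [CommRing B] {s t : A}

theorem exists_of_add_of_mul_root (x : AdjoinRoot (X ^ 2 - C s * X + C t)) :
    ∃ a b, of _ a + of _ b * root _ = x := by
  have hroot : root (X ^ 2 - C s * X + C t) ^ 2 = of _ s * root _ - of _ t := by
    have := eval₂_root (X ^ 2 - C s * X + C t)
    simp only [eval₂_add, eval₂_sub, eval₂_mul, eval₂_pow, eval₂_X, eval₂_C] at this
    linear_combination this
  induction x using AdjoinRoot.induction_on with | ih p => ?_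
  induction p using Polynomial.induction_on with
  | C a => exact ⟨a, 0, by simp⟩
  | add p q hp hq =>
    obtain ⟨a, b, hab⟩ := hp
    obtain ⟨c, d, hcd⟩ := hq
    exact ⟨a + c, b + d, by simp only [map_add, ← hab, ← hcd]; ring⟩
  | monomial n a ih =>
    obtain ⟨c, d, hcd⟩ := ih
    refine ⟨-(d * t), c + d * s, ?_⟩
    rw [pow_succ (X : A[X]) n, ← mul_assoc, map_mul, ← hcd, mk_X]
    simp only [map_add, map_mul, map_neg]
    linear_combination (-of _ d) * hroot

theorem lift_bijective {f : A →+* B} {x : B} (hx : (X ^ 2 - C s * X + C t).eval₂ f x = 0)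
    (h : Function.Bijective fun ab : A × A => f ab.1 + f ab.2 * x) :
    Function.Bijective (lift f x hx) := by
  let χ : A × A → AdjoinRoot (X ^ 2 - C s * X + C t) := fun ab => of _ ab.1 + of _ ab.2 * root _
  have hχ : Function.Surjective χ := fun y => by
    obtain ⟨a, b, hab⟩ := exists_of_add_of_mul_root y
    exact ⟨(a, b), hab⟩
  have hcomp : lift f x hx ∘ χ = fun ab : A × A => f ab.1 + f ab.2 * x := by
    ext ab
    simp [χ, lift_of, lift_root]
  exact ⟨.of_comp_right (hcomp ▸ h.1) hχ, .of_comp (hcomp ▸ h.2)⟩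

end AdjoinRoot

open PowerSeries in
/-- With `G` the unique power series satisfying `X + ι(X) = G(X·ι(X))`, the
`R[[U]]`-algebra map `R[[U]][T]/(T² − G(U)T + U) → R[[X]]`, `U ↦ X·ι(X)`, `T ↦ X`, is well
defined (i.e. `X² − G(X·ι(X))·X + X·ι(X) = 0`) and bijective; in particular `R[[X]]` is a
finite module over the image of `R[[U]]`. -/
theorem stmt_3 {R : Type*} [CommRing R] (F : MvPowerSeries (Fin 2) R) (hF : IsFGL F)
    (ι : PowerSeries R) (hι : IsFormalInverse F ι)
    (G : PowerSeries R) (hG : psubst (PowerSeries.X * ι) G = PowerSeries.X + ι) :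
    (PowerSeries.X ^ 2 - psubst (PowerSeries.X * ι) G * PowerSeries.X
        + PowerSeries.X * ι = 0) ∧
    ∃ σ : PowerSeries R →+* PowerSeries R,
      (∀ h : PowerSeries R, σ h = psubst (PowerSeries.X * ι) h) ∧
      (∃ ψ : AdjoinRoot (Polynomial.X ^ 2 - Polynomial.C G * Polynomial.X
            + Polynomial.C (PowerSeries.X) : Polynomial (PowerSeries R)) →+* PowerSeries R,
        (∀ h : PowerSeries R, ψ (AdjoinRoot.of _ h) = σ h) ∧
        ψ (AdjoinRoot.root _) = PowerSeries.X ∧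
        Function.Bijective ψ) ∧
      σ.Finite := by
  obtain ⟨v, hv⟩ : X ∣ ι := X_dvd_iff.mpr hι.1
  have hv_unit : IsUnit v := by
    rw [isUnit_iff_constantCoeff, ← coeff_zero_eq_constantCoeff_apply, ← coeff_succ_X_mul, ← hv,
      hι.coeff_one hF]
    exact isUnit_one.neg
  have hu : constantCoeff (X * ι) = 0 := by simp
  let σ : R⟦X⟧ →ₐ[R] R⟦X⟧ := substAlgHom (HasSubst.of_constantCoeff_zero' hu)
  have hσ (h : R⟦X⟧) : σ h = psubst (X * ι) h := by
    rw [psubst_eq_subst hu, ← coe_substAlgHom]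
  have hσX : σ X = X * ι := by
    rw [hσ, psubst_eq_subst hu, subst_X (HasSubst.of_constantCoeff_zero' hu)]
  have hroot : (Polynomial.X ^ 2 - Polynomial.C G * Polynomial.X + Polynomial.C X).eval₂
      (σ : R⟦X⟧ →+* R⟦X⟧) X = 0 := by
    simp only [Polynomial.eval₂_add, Polynomial.eval₂_sub, Polynomial.eval₂_mul,
      Polynomial.eval₂_X_pow, Polynomial.eval₂_X, Polynomial.eval₂_C, RingHom.coe_coe, hσX, hσ,
      hG]
    ring
  let ψ := AdjoinRoot.lift _ _ hroot
  have hψ : Function.Bijective ψ := AdjoinRoot.lift_bijective hroot <|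
    bijective_map_add_map_mul_X (w := hv_unit.unit) (by rw [hσX, hv, IsUnit.unit_spec]; ring)
  refine ⟨by rw [hG]; ring, σ, hσ,
    ⟨ψ, fun h => AdjoinRoot.lift_of hroot, AdjoinRoot.lift_root hroot, hψ⟩, ?_⟩
  have hσψ : (σ : R⟦X⟧ →+* R⟦X⟧) = ψ.comp (algebraMap _ _) :=
    RingHom.ext fun h => (AdjoinRoot.lift_of hroot).symm
  have hmonic : (Polynomial.X ^ 2 - Polynomial.C G * Polynomial.X
      + Polynomial.C (X : R⟦X⟧)).Monic := by monicity!
  rw [hσψ]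
  exact (RingHom.Finite.of_surjective ψ hψ.2).comp
    (RingHom.finite_algebraMap.mpr hmonic.finite_adjoinRoot)
end

section
/- Let A = ℤ[1/2][ε, a]/(ε² − 1) be the polynomial ring in a over ℤ[1/2][ε]/(ε²−1). Then the ideal of A generated by the two elements a² − 832 + 768ε and (a − 40)(ε − 1) is equal to the ideal generated by the two elements (a − 40)(1 − ε) and (a − 8)(a + 8)(1 + ε). (A witness for one inclusion is the identity a² − 832 + 768ε = ((a−40)e + (a−8)f)((a−40)e + (a+8)f) + 80(a−40)e, where e = (1−ε)/2 and f = (1+ε)/2 are the idempotents of ℤ[1/2][ε]/(ε²−1).) -/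
noncomputable section

/-- The ring `ℤ[1/2]`. -/
abbrev Zhalf : Type := Localization.Away (2 : ℤ)

/-- The ring `ℤ[1/2][ε]/(ε² − 1)`. -/
abbrev Zeps : Type := AdjoinRoot (Polynomial.X ^ 2 - 1 : Polynomial Zhalf)

/-- The polynomial ring `A = ℤ[1/2][ε, a]/(ε² − 1)`, a polynomial ring in `a` over
`ℤ[1/2][ε]/(ε²−1)`. -/
abbrev A15 : Type := Polynomial Zeps

/-- The element `ε` of `A`. -/
def ε15 : A15 := Polynomial.C (AdjoinRoot.root (Polynomial.X ^ 2 - 1 : Polynomial Zhalf))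

/-- The element `a` of `A`. -/
def a15 : A15 := Polynomial.X

end

theorem AdjoinRoot.root_X_sq_sub_one_sq (R : Type*) [CommRing R] :
    AdjoinRoot.root (Polynomial.X ^ 2 - 1 : Polynomial R) ^ 2 = 1 := by
  have h := AdjoinRoot.eval₂_root (Polynomial.X ^ 2 - 1 : Polynomial R)
  simp only [Polynomial.eval₂_sub, Polynomial.eval₂_X_pow, Polynomial.eval₂_one] at h
  exact sub_eq_zero.mp h

theorem ε15_sq : ε15 ^ 2 = 1 := by
  rw [ε15, ← Polynomial.C_pow, AdjoinRoot.root_X_sq_sub_one_sq, Polynomial.C_1]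

theorem isUnit_two_A15 : IsUnit (2 : A15) := by
  simpa [map_ofNat] using
    (IsLocalization.Away.algebraMap_isUnit (2 : ℤ) (S := Zhalf)).map (algebraMap Zhalf A15)

theorem Ideal.span_pair_eq_of_sq_eq_one {R : Type*} [CommRing R] {ε : R} (hε : ε ^ 2 = 1)
    (h2 : IsUnit (2 : R)) (a : R) :
    Ideal.span {a ^ 2 - 832 + 768 * ε, (a - 40) * (ε - 1)} =
      Ideal.span {(a - 40) * (1 - ε), (a - 8) * (a + 8) * (1 + ε)} := by
  obtain ⟨half, h2half⟩ := h2.exists_right_inv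
  apply le_antisymm <;> rw [Ideal.span_le] <;> rintro x (rfl | rfl) <;>
    rw [SetLike.mem_coe, Ideal.mem_span_pair]
  · -- `2 (a² − 832 + 768ε) = (a + 40) · (a − 40)(1 − ε) + (a − 8)(a + 8)(1 + ε)`
    exact ⟨half * (a + 40), half, by linear_combination (a ^ 2 - 832 + 768 * ε) * h2half⟩
  · exact ⟨-1, 0, by ring⟩
  · exact ⟨0, -1, by ring⟩
  · -- `ε² = 1` gives `(1 + ε)(a² − 832 + 768ε) = (1 + ε)(a² − 64)`
    exact ⟨1 + ε, 0, by linear_combination 768 * hε⟩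

/-- In `A = ℤ[1/2][ε,a]/(ε²−1)`, the ideal generated by `a² − 832 + 768ε`
and `(a − 40)(ε − 1)` equals the ideal generated by `(a − 40)(1 − ε)` and
`(a − 8)(a + 8)(1 + ε)`. -/
theorem stmt_15 :
    Ideal.span {a15 ^ 2 - 832 + 768 * ε15, (a15 - 40) * (ε15 - 1)} =
      Ideal.span {(a15 - 40) * (1 - ε15), (a15 - 8) * (a15 + 8) * (1 + ε15)} :=
  Ideal.span_pair_eq_of_sq_eq_one ε15_sq isUnit_two_A15 a15
end

section
/- In the polynomial ring A = ℤ[x,y,z][S]/(S² − 2(x+y)S + (x−y)²), with S' := 2(x+y) − S, the following identity holds in A[t]: (1 + 2(S+z)t + (S−z)²t²)·(1 + 2(S'+z)t + (S'−z)²t²) = 1 + 4(x+y+z)t + [6(x²+y²+z²) + 4(xy+xz+yz)]t² + [4(x³+y³+z³) − 4(x²y+x²z+y²x+y²z+z²x+z²y) + 40xyz]t³ + [(x⁴+y⁴+z⁴) − 4(x³y+x³z+y³x+y³z+z³x+z³y) + 6(x²y²+x²z²+y²z²) + 4(x²yz+xy²z+xyz²)]t⁴. (This computes the formal ternary law of Chow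 groups as the image under the functor C of the elementary 2-valued formal group of type I, F_t(x,y) = 1 + 2(x+y)t + (x−y)²t², which is the image of the additive formal group law under N.) -/
noncomputable section

open MvPolynomial

/-- The base polynomial ring `ℤ[x,y,z]`. -/
abbrev B18 : Type := MvPolynomial (Fin 3) ℤ

/-- The variable `x`. -/
def x18 : B18 := X 0

/-- The variable `y`. -/
def y18 : B18 := X 1

/-- The variable `z`. -/
def z18 : B18 := X 2

/-- The quadratic polynomial `S² − 2(x+y)S + (x−y)²` defining the splitting algebra. -/
def q18 : Polynomial B18 :=
  Polynomial.X ^ 2 - Polynomial.C (2 * (x18 + y18)) * Polynomial.X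
    + Polynomial.C ((x18 - y18) ^ 2)

/-- The root `S` in the splitting algebra `A = ℤ[x,y,z][S]/(S² − 2(x+y)S + (x−y)²)`. -/
def S18 : AdjoinRoot q18 := AdjoinRoot.root q18

/-- The conjugate root `S' = 2(x+y) − S`. -/
def S18' : AdjoinRoot q18 := AdjoinRoot.of q18 (2 * (x18 + y18)) - S18

/-- The image of `z` in the splitting algebra. -/
def zA18 : AdjoinRoot q18 := AdjoinRoot.of q18 z18

end


/-!
The product `F_t(S, z) F_t(S', z)` is symmetric in the two roots `S, S'`, so its
coefficients are polynomials in `S + S' = 2(x+y)` and `S S' = (x−y)²`; substituting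
these values gives the displayed polynomial in `x, y, z`.
-/

open Polynomial

section

variable {R : Type*} [CommRing R]

/-- The elementary 2-valued formal group law of type I. -/
noncomputable def elementaryTypeI (u v : R) : R[X] :=
  1 + C (2 * (u + v)) * X + C ((u - v) ^ 2) * X ^ 2

theorem elementaryTypeI_mul_elementaryTypeI {s s' σ π : R} (hsum : s + s' = σ)
    (hprod : s * s' = π) (z : R) :
    elementaryTypeI s z * elementaryTypeI s' z =
      1 + C (2 * σ + 4 * z) * X + C (σ ^ 2 + 2 * π + 2 * σ * z + 6 * z ^ 2) * X ^ 2
        + C (2 * σ * π - 12 * π * z + 2 * σ ^ 2 * z - 2 * σ * z ^ 2 + 4 * z ^ 3) * X ^ 3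
        + C ((π - σ * z + z ^ 2) ^ 2) * X ^ 4 := by
  subst hsum hprod
  simp only [elementaryTypeI, map_add, map_sub, map_mul, map_pow, map_ofNat]
  ring

theorem AdjoinRoot.root_mul_sub_root (a b : R) :
    root (X ^ 2 - C a * X + C b) * (of (X ^ 2 - C a * X + C b) a - root _) = of _ b := by
  have h := eval₂_root (X ^ 2 - C a * X + C b)
  simp only [eval₂_add, eval₂_sub, eval₂_mul, eval₂_pow, eval₂_C, eval₂_X] at h
  linear_combination -h

end

/-- In `A = ℤ[x,y,z][S]/(S² − 2(x+y)S + (x−y)²)` with `S' = 2(x+y) − S`,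
the product `(1 + 2(S+z)t + (S−z)²t²)(1 + 2(S'+z)t + (S'−z)²t²)` equals the displayed
degree-4 polynomial in `t`: this computes the formal ternary law of Chow groups as the
image under `C` of the elementary 2-valued formal group of type I. -/
theorem stmt_18 :
    (1 + Polynomial.C (2 * (S18 + zA18)) * Polynomial.X
        + Polynomial.C ((S18 - zA18) ^ 2) * Polynomial.X ^ 2)
      * (1 + Polynomial.C (2 * (S18' + zA18)) * Polynomial.X
        + Polynomial.C ((S18' - zA18) ^ 2) * Polynomial.X ^ 2)
    = 1 + Polynomial.C (AdjoinRoot.of q18 (4 * (x18 + y18 + z18))) * Polynomial.X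
      + Polynomial.C (AdjoinRoot.of q18 (6 * (x18 ^ 2 + y18 ^ 2 + z18 ^ 2)
          + 4 * (x18 * y18 + x18 * z18 + y18 * z18))) * Polynomial.X ^ 2
      + Polynomial.C (AdjoinRoot.of q18 (4 * (x18 ^ 3 + y18 ^ 3 + z18 ^ 3)
          - 4 * (x18 ^ 2 * y18 + x18 ^ 2 * z18 + y18 ^ 2 * x18 + y18 ^ 2 * z18
              + z18 ^ 2 * x18 + z18 ^ 2 * y18)
          + 40 * (x18 * y18 * z18))) * Polynomial.X ^ 3
      + Polynomial.C (AdjoinRoot.of q18 ((x18 ^ 4 + y18 ^ 4 + z18 ^ 4)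
          - 4 * (x18 ^ 3 * y18 + x18 ^ 3 * z18 + y18 ^ 3 * x18 + y18 ^ 3 * z18
              + z18 ^ 3 * x18 + z18 ^ 3 * y18)
          + 6 * (x18 ^ 2 * y18 ^ 2 + x18 ^ 2 * z18 ^ 2 + y18 ^ 2 * z18 ^ 2)
          + 4 * (x18 ^ 2 * y18 * z18 + x18 * y18 ^ 2 * z18 + x18 * y18 * z18 ^ 2)))
          * Polynomial.X ^ 4 := by
  have hsum : S18 + S18' = AdjoinRoot.of q18 (2 * (x18 + y18)) := add_sub_cancel S18 _
  have hprod : S18 * S18' = AdjoinRoot.of q18 ((x18 - y18) ^ 2) :=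
    AdjoinRoot.root_mul_sub_root _ _
  calc _ = elementaryTypeI S18 zA18 * elementaryTypeI S18' zA18 := rfl
    _ = _ := by
      rw [elementaryTypeI_mul_elementaryTypeI hsum hprod, zA18]
      simp only [map_add, map_sub, map_mul, map_pow, map_ofNat]
      ring
end
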